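/- In the setting of the previous statement (s of order d determined by a nonempty subset 𝒪 ⊆ Δ_a with d = Σ_{α ∈ 𝒪} d(α), via α(s) = ζ_d for α ∈ 𝒪 and α(s) = 1 for α ∈ Δ_a \ 𝒪), the set 𝒪 equals the set of minimal elements of 𝔖 = {α ∈ Φ : α(s) = ζ_d} for the partial order ≤_{B'}. -/

import Mathlib

open Finset

/-- A (crystallographic, reduced, irreducible) root system in a `ℚ`-vector space,
encoded by its set of roots together with a choice of coroots. -/
structure RootSystemData (V : Type*) [AddCommGroup V] [Module ℚ V] where
  Φ : Set V
  coroot : V → V →ₗ[ℚ] ℚ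
  finite : Φ.Finite
  ne_zero : ∀ α ∈ Φ, α ≠ (0 : V)
  span_eq_top : Submodule.span ℚ Φ = ⊤
  coroot_self : ∀ α ∈ Φ, coroot α α = 2
  reflect_mem : ∀ α ∈ Φ, ∀ β ∈ Φ, β - coroot α β • α ∈ Φ
  crystallographic : ∀ α ∈ Φ, ∀ β ∈ Φ, ∃ n : ℤ, coroot α β = (n : ℚ)
  reduced : ∀ α ∈ Φ, ∀ t : ℚ, t • α ∈ Φ → t = 1 ∨ t = -1
  irreducible : ∀ Φ₁ Φ₂ : Set V, Φ₁ ∪ Φ₂ = Φ → Φ₁ ∩ Φ₂ = ∅ →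
    (∀ α ∈ Φ₁, ∀ β ∈ Φ₂, coroot α β = 0) → Φ₁ = ∅ ∨ Φ₂ = ∅

variable {V : Type*} [AddCommGroup V] [Module ℚ V]

/-- `Δ` is a base (set of simple roots) of the root system: it is linearly independent and
every root is a nonnegative or nonpositive integer combination of the simple roots. -/
def RootSystemData.IsBase (R : RootSystemData V) (Δ : Finset V) : Prop :=
  (↑Δ : Set V) ⊆ R.Φ ∧ LinearIndependent ℚ (fun a : {x : V // x ∈ Δ} => (a : V)) ∧
    ∀ β ∈ R.Φ, (∃ c : V → ℕ, β = ∑ α ∈ Δ, (c α : ℚ) • α) ∨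
      (∃ c : V → ℕ, β = -∑ α ∈ Δ, (c α : ℚ) • α)

/-- `β` is a positive root with respect to the base `Δ`. -/
def RootSystemData.IsPos (R : RootSystemData V) (Δ : Finset V) (β : V) : Prop :=
  β ∈ R.Φ ∧ ∃ c : V → ℕ, β = ∑ α ∈ Δ, (c α : ℚ) • α

/-- `θ` is the highest root with respect to `Δ`: a positive root which dominates
every positive root for the dominance order. -/
def RootSystemData.IsHighest (R : RootSystemData V) (Δ : Finset V) (θ : V) : Prop :=
  R.IsPos Δ θ ∧ ∀ β : V, R.IsPos Δ β → ∃ c : V → ℕ, θ - β = ∑ α ∈ Δ, (c α : ℚ) • α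

/-!
Write `Δₐ = {α₀} ∪ Δ`. Since `Δ` is linearly independent, the only relations among the elements
of `Δₐ` are the multiples of `∑ d(α) α = 0`, whose coefficients all have the same sign. Hence two
distinct elements of `𝒪` are incomparable for `≤_{B'}`, and `≤_{B'}` is antisymmetric.
Every root is `∑ b(α) α` with `0 ≤ b ≤ d` on `Δₐ`, and then `α(s) = ζ ^ ∑_{𝒪} b`; for a root
of `𝔖` this forces `∑_{𝒪} b = 1` (after adding the relation once when `d = 1`), so every element
of `𝔖` lies above an element of `𝒪`. Both inclusions follow.
-/

/-- `IsNatComb (Δₐ \ 𝒪) (β - γ)` is the relation `γ ≤_{B'} β`. -/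
def IsNatComb (S : Finset V) (v : V) : Prop :=
  ∃ c : V → ℕ, v = ∑ x ∈ S, (c x : ℚ) • x

theorem IsNatComb.add {S : Finset V} {u v : V} (hu : IsNatComb S u) (hv : IsNatComb S v) :
    IsNatComb S (u + v) := by
  obtain ⟨c, rfl⟩ := hu
  obtain ⟨c', rfl⟩ := hv
  exact ⟨c + c', by simp only [Pi.add_apply, Nat.cast_add, add_smul, sum_add_distrib]⟩

theorem map_sum_natCast_smul_eq_prod_pow {G : Type*} [CommGroup G] {s : V → G}
    (hs : ∀ x y, s (x + y) = s x * s y) (A : Finset V) (b : V → ℕ) :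
    s (∑ x ∈ A, (b x : ℚ) • x) = ∏ x ∈ A, s x ^ b x := by
  let φ : Multiplicative V →* G := MonoidHom.mk' (fun v => s v.toAdd) fun _ _ => hs _ _
  have hφ (v : V) : s v = φ (.ofAdd v) := rfl
  simp only [hφ, ofAdd_sum, map_prod, Nat.cast_smul_eq_nsmul, ofAdd_nsmul, map_pow]

theorem IsPrimitiveRoot.eq_one_or_of_pow_eq_self {G : Type*} [CancelCommMonoid G]
    {ζ : G} {d k : ℕ} (hζ : IsPrimitiveRoot ζ d) (hk : k ≤ d) (h : ζ ^ k = ζ) :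
    k = 1 ∨ k = 0 ∧ d = 1 := by
  have hmod : k % d = 1 % d := by
    rw [hζ.eq_orderOf, ← Nat.ModEq, ← pow_eq_pow_iff_modEq, pow_one, h]
  rcases hk.lt_or_eq with hlt | rfl
  · rw [Nat.mod_eq_of_lt hlt] at hmod
    rcases Nat.lt_or_ge 1 d with h1 | h1
    · rw [Nat.mod_eq_of_lt h1] at hmod
      exact .inl hmod
    · obtain rfl : d = 1 := by omega
      omega
  · rw [Nat.mod_self, eq_comm, ← Nat.dvd_iff_mod_eq_zero, Nat.dvd_one] at hmod
    exact .inl hmod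

theorem sum_ite_mem_eq_sum_sdiff {ι M : Type*} [DecidableEq ι] [AddCommMonoid M] (A O : Finset ι)
    (g : ι → M) : ∑ x ∈ A, (if x ∈ O then 0 else g x) = ∑ x ∈ A \ O, g x := by
  rw [sdiff_eq_filter, sum_filter]
  simp only [ite_not]

section

variable [DecidableEq V] {A O : Finset V} {m : V → ℕ}

theorem eq_of_mem_of_isNatComb_sub
    (hker : ∀ f : V → ℚ, ∑ x ∈ A, f x • x = 0 → ∃ t : ℚ, ∀ x ∈ A, f x = t * m x)
    (hOA : O ⊆ A) {α β : V} (hα : α ∈ O) (hβ : β ∈ O) (h : IsNatComb (A \ O) (β - α)) :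
    α = β := by
  obtain ⟨c, hc⟩ := h
  by_contra hne
  obtain ⟨t, ht⟩ := hker (fun x => ((if x = α then 1 else 0) - (if x = β then 1 else 0) +
    if x ∈ O then 0 else (c x : ℚ))) (by
      simp only [add_smul, sub_smul, sum_add_distrib, sum_sub_distrib, ite_smul, one_smul,
        zero_smul, sum_ite_eq', hOA hα, hOA hβ, if_true, sum_ite_mem_eq_sum_sdiff, ← hc]
      abel)
  have hα' := ht α (hOA hα)
  have hβ' := ht β (hOA hβ)
  simp only [hα, hβ, hne, Ne.symm hne, if_true, if_false, sub_zero, zero_sub, add_zero]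
    at hα' hβ'
  have hm := mul_nonneg (mul_self_nonneg t) (mul_nonneg (m α).cast_nonneg (m β).cast_nonneg)
  nlinarith

theorem eq_zero_of_isNatComb_of_isNatComb_neg
    (hker : ∀ f : V → ℚ, ∑ x ∈ A, f x • x = 0 → ∃ t : ℚ, ∀ x ∈ A, f x = t * m x)
    (hOA : O ⊆ A) (hO : O.Nonempty) (hm : ∀ x ∈ O, m x ≠ 0) {v : V}
    (h : IsNatComb (A \ O) v) (h' : IsNatComb (A \ O) (-v)) : v = 0 := by
  obtain ⟨c, hc⟩ := h
  obtain ⟨c', hc'⟩ := h'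
  obtain ⟨t, ht⟩ := hker (fun x => if x ∈ O then 0 else (c x + c' x : ℚ)) (by
    simp only [ite_smul, zero_smul, sum_ite_mem_eq_sum_sdiff, add_smul, sum_add_distrib, ← hc,
      ← hc', add_neg_cancel])
  obtain ⟨a, ha⟩ := hO
  have ht0 : t = 0 := by
    have hta := ht a (hOA ha)
    simp only [ha, if_true] at hta
    exact (mul_eq_zero.mp hta.symm).resolve_right (by exact_mod_cast hm a ha)
  rw [hc]
  refine sum_eq_zero fun x hx => ?_
  have hcc' := ht x (sdiff_subset hx)
  simp only [(mem_sdiff.mp hx).2, if_false, ht0, zero_mul] at hcc'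
  have hcx : (c x : ℚ) = 0 := by linarith [(c' x).cast_nonneg (α := ℚ)]
  rw [hcx, zero_smul]

theorem exists_mem_isNatComb_sub_of_sum_eq_one (hOA : O ⊆ A) (b : V → ℕ)
    (hb : ∑ x ∈ O, b x = 1) : ∃ α ∈ O, IsNatComb (A \ O) (∑ x ∈ A, (b x : ℚ) • x - α) := by
  obtain ⟨α, hα, hbα0⟩ := exists_ne_zero_of_sum_ne_zero (hb ▸ one_ne_zero)
  have hsplit := add_sum_erase O b hα
  have hbα : b α = 1 := by omega
  have hrest : ∀ x ∈ O.erase α, b x = 0 :=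
    sum_eq_zero_iff.mp (show ∑ x ∈ O.erase α, b x = 0 by omega)
  have hO : ∑ x ∈ O, (b x : ℚ) • x = α := by
    rw [← add_sum_erase O _ hα, hbα, sum_eq_zero fun x hx => by simp [hrest x hx]]
    simp
  exact ⟨α, hα, b, by rw [← sum_sdiff hOA, hO, add_sub_cancel_right]⟩

theorem exists_mem_isNatComb_sub (hOA : O ⊆ A) (hrel : ∑ x ∈ A, (m x : ℚ) • x = 0)
    {G : Type*} [CommGroup G] {s : V → G} (hs : ∀ x y, s (x + y) = s x * s y) {ζ : G}
    (hζ : IsPrimitiveRoot ζ (∑ x ∈ O, m x)) (hs1 : ∀ x ∈ A \ O, s x = 1)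
    (hsζ : ∀ x ∈ O, s x = ζ) (b : V → ℕ) (hb : ∀ x ∈ O, b x ≤ m x)
    (hbζ : s (∑ x ∈ A, (b x : ℚ) • x) = ζ) :
    ∃ α ∈ O, IsNatComb (A \ O) (∑ x ∈ A, (b x : ℚ) • x - α) := by
  have hval : s (∑ x ∈ A, (b x : ℚ) • x) = ζ ^ ∑ x ∈ O, b x := by
    rw [map_sum_natCast_smul_eq_prod_pow hs, ← prod_sdiff hOA,
      prod_eq_one fun x hx => by rw [hs1 x hx, one_pow], one_mul,
      prod_congr rfl fun x hx => by rw [hsζ x hx], prod_pow_eq_pow_sum]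
  rcases hζ.eq_one_or_of_pow_eq_self (sum_le_sum hb) (hval ▸ hbζ) with h1 | ⟨h0, hd⟩
  · exact exists_mem_isNatComb_sub_of_sum_eq_one hOA b h1
  · -- adding the relation `∑ m x • x = 0` once raises `∑_{O} b` from `0` to `d = 1`
    simpa only [Pi.add_apply, Nat.cast_add, add_smul, sum_add_distrib, hrel, add_zero] using
      exists_mem_isNatComb_sub_of_sum_eq_one hOA (b + m)
        (by simp only [Pi.add_apply, sum_add_distrib, h0, hd])

end

theorem eq_of_sum_smul_eq_sum_smul {Δ : Finset V}
    (hli : LinearIndependent ℚ (fun a : {x : V // x ∈ Δ} => (a : V))) {f g : V → ℚ}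
    (h : ∑ x ∈ Δ, f x • x = ∑ x ∈ Δ, g x • x) : ∀ x ∈ Δ, f x = g x := fun x hx =>
  sub_eq_zero.mp <| (linearIndepOn_finset_iff (v := id) (s := Δ)).mp hli (f - g)
    (by simp only [Pi.sub_apply, sub_smul, sum_sub_distrib, id, h, sub_self]) x hx

theorem coeff_eq_add_of_sum_eq_add {Δ : Finset V}
    (hli : LinearIndependent ℚ (fun a : {x : V // x ∈ Δ} => (a : V))) {dm c e : V → ℕ}
    (h : ∑ x ∈ Δ, (dm x : ℚ) • x = ∑ x ∈ Δ, (c x : ℚ) • x + ∑ x ∈ Δ, (e x : ℚ) • x) :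
    ∀ x ∈ Δ, dm x = c x + e x := fun x hx => by
  exact_mod_cast eq_of_sum_smul_eq_sum_smul hli (f := fun x => (dm x : ℚ))
    (g := fun x => (c x + e x : ℚ)) (by simp only [add_smul, sum_add_distrib, h]) x hx

section

variable [DecidableEq V] {Δ : Finset V} {α₀ : V} {dm : V → ℕ}

theorem exists_eq_mul_of_sum_insert_smul_eq_zero
    (hli : LinearIndependent ℚ (fun a : {x : V // x ∈ Δ} => (a : V))) (hα₀Δ : α₀ ∉ Δ)
    (hα₀ : α₀ = -∑ x ∈ Δ, (dm x : ℚ) • x) (hd0 : dm α₀ = 1) (f : V → ℚ)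
    (hf : ∑ x ∈ insert α₀ Δ, f x • x = 0) : ∃ t : ℚ, ∀ x ∈ insert α₀ Δ, f x = t * dm x := by
  have hrel : ∑ x ∈ Δ, f x • x = ∑ x ∈ Δ, (f α₀ * dm x) • x := by
    rw [sum_insert hα₀Δ, add_eq_zero_iff_eq_neg] at hf
    simp only [mul_smul, ← smul_sum]
    rw [← neg_neg (∑ x ∈ Δ, (dm x : ℚ) • x), ← hα₀, smul_neg, hf, neg_neg]
  refine ⟨f α₀, (forall_mem_insert _ _ _).mpr ⟨by rw [hd0, Nat.cast_one, mul_one], ?_⟩⟩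
  exact eq_of_sum_smul_eq_sum_smul hli hrel

theorem sum_insert_smul_eq_zero (hα₀Δ : α₀ ∉ Δ) (hα₀ : α₀ = -∑ x ∈ Δ, (dm x : ℚ) • x)
    (hd0 : dm α₀ = 1) : ∑ x ∈ insert α₀ Δ, (dm x : ℚ) • x = 0 := by
  rw [sum_insert hα₀Δ, hd0, Nat.cast_one, one_smul, hα₀, neg_add_cancel]

theorem exists_eq_sum_insert_of_le (hα₀Δ : α₀ ∉ Δ) {v : V} {n : ℕ} {c : V → ℕ}
    (hv : v = (n : ℚ) • α₀ + ∑ x ∈ Δ, (c x : ℚ) • x) (hn : n ≤ dm α₀)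
    (hc : ∀ x ∈ Δ, c x ≤ dm x) :
    ∃ b : V → ℕ, v = ∑ x ∈ insert α₀ Δ, (b x : ℚ) • x ∧ ∀ x ∈ insert α₀ Δ, b x ≤ dm x := by
  have hupd : ∀ x ∈ Δ, Function.update c α₀ n x = c x := fun x hx =>
    Function.update_of_ne (ne_of_mem_of_not_mem hx hα₀Δ) _ _
  refine ⟨Function.update c α₀ n, ?_, (forall_mem_insert _ _ _).mpr ⟨?_, ?_⟩⟩
  · rw [hv, sum_insert hα₀Δ, Function.update_self]
    exact congrArg _ (sum_congr rfl fun x hx => by rw [hupd x hx])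
  · rwa [Function.update_self]
  · exact fun x hx => hupd x hx ▸ hc x hx

end

namespace RootSystemData

variable (R : RootSystemData V)

theorem neg_mem {β : V} (hβ : β ∈ R.Φ) : -β ∈ R.Φ := by
  have h := R.reflect_mem β hβ β hβ
  rwa [R.coroot_self β hβ, two_smul, sub_add_cancel_left] at h

variable {R} {Δ : Finset V} {θ : V} {dm : V → ℕ}

theorem IsHighest.marks_pos [DecidableEq V] (hΔ : R.IsBase Δ) (hθ : R.IsHighest Δ θ)
    (hdθ : θ = ∑ x ∈ Δ, (dm x : ℚ) • x) {α : V} (hα : α ∈ Δ) : 0 < dm α := by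
  have hαsum : α = ∑ x ∈ Δ, ((Pi.single α 1 : V → ℕ) x : ℚ) • x := by
    simp [Pi.single_apply, hα]
  obtain ⟨e, he⟩ := hθ.2 α ⟨hΔ.1 hα, _, hαsum⟩
  have hdmα := coeff_eq_add_of_sum_eq_add hΔ.2.1 (c := Pi.single α 1) (e := e)
    (by rw [← hdθ, ← hαsum, ← he, add_sub_cancel]) α hα
  simp only [Pi.single_eq_same] at hdmα
  omega

theorem IsHighest.exists_eq_sum_le_marks [DecidableEq V] (hΔ : R.IsBase Δ)
    (hθ : R.IsHighest Δ θ) (hdθ : θ = ∑ x ∈ Δ, (dm x : ℚ) • x) {α₀ : V} (hα₀ : α₀ = -θ)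
    (hα₀Δ : α₀ ∉ Δ) (hd0 : dm α₀ = 1) {β : V} (hβ : β ∈ R.Φ) :
    ∃ b : V → ℕ, β = ∑ x ∈ insert α₀ Δ, (b x : ℚ) • x ∧ ∀ x ∈ insert α₀ Δ, b x ≤ dm x := by
  rcases hΔ.2.2 β hβ with ⟨c, hc⟩ | ⟨c, hc⟩
  · obtain ⟨e, he⟩ := hθ.2 β ⟨hβ, c, hc⟩
    have hdm := coeff_eq_add_of_sum_eq_add hΔ.2.1 (c := c) (e := e)
      (by rw [← hdθ, ← hc, ← he, add_sub_cancel])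
    exact exists_eq_sum_insert_of_le hα₀Δ (n := 0)
      (by rw [hc, Nat.cast_zero, zero_smul, zero_add]) (Nat.zero_le _)
      fun x hx => (hdm x hx).symm ▸ Nat.le_add_right _ _
  · -- a negative root is `α₀` plus the complement of `-β` under `θ`
    have hc' : -β = ∑ x ∈ Δ, (c x : ℚ) • x := by rw [hc, neg_neg]
    obtain ⟨e, he⟩ := hθ.2 (-β) ⟨R.neg_mem hβ, c, hc'⟩
    have hdm := coeff_eq_add_of_sum_eq_add hΔ.2.1 (c := e) (e := c)
      (by rw [← hdθ, ← he, ← hc', sub_add_cancel])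
    exact exists_eq_sum_insert_of_le hα₀Δ (n := 1)
      (by rw [Nat.cast_one, one_smul, ← he, hα₀]; abel) hd0.ge
      fun x hx => (hdm x hx).symm ▸ Nat.le_add_right _ _

end RootSystemData

/-- $\mathcal{O}$ is exactly the set of minimal elements of
$\mathfrak{S} = \{\alpha \in \Phi : \alpha(s) = \zeta_d\}$ for the order $\le_{B'}$. -/
theorem stmt_10 {V : Type*} [AddCommGroup V] [Module ℚ V] [DecidableEq V]
    (R : RootSystemData V) (Δ : Finset V) (hΔ : R.IsBase Δ)
    (θ : V) (hθ : R.IsHighest Δ θ)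
    (α₀ : V) (hα₀ : α₀ = -θ) (hα₀Δ : α₀ ∉ Δ)
    (dm : V → ℕ) (hd0 : dm α₀ = 1) (hdθ : θ = ∑ α ∈ Δ, (dm α : ℚ) • α)
    (O : Finset V) (hOsub : O ⊆ insert α₀ Δ) (hOne : O.Nonempty)
    (d : ℕ) (hd : d = ∑ α ∈ O, dm α)
    (ζ : ℂˣ) (hζ : IsPrimitiveRoot ζ d)
    (s : V → ℂˣ) (hs : ∀ x y : V, s (x + y) = s x * s y)
    (hs1 : ∀ α ∈ insert α₀ Δ \ O, s α = 1)
    (hsζ : ∀ α ∈ O, s α = ζ) :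
    ∀ β : V, β ∈ O ↔
      (β ∈ R.Φ ∧ s β = ζ ∧ ∀ γ ∈ R.Φ, s γ = ζ →
        (∃ c : V → ℕ, β - γ = ∑ x ∈ insert α₀ Δ \ O, (c x : ℚ) • x) → γ = β) := by
  subst hd
  have hα₀' : α₀ = -∑ x ∈ Δ, (dm x : ℚ) • x := by rw [hα₀, hdθ]
  have hker := exists_eq_mul_of_sum_insert_smul_eq_zero hΔ.2.1 hα₀Δ hα₀' hd0
  have hmarks : ∀ x ∈ O, dm x ≠ 0 := fun x hx => by
    rcases mem_insert.mp (hOsub hx) with rfl | hx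
    · rw [hd0]; exact one_ne_zero
    · exact (hθ.marks_pos hΔ hdθ hx).ne'
  have hOΦ : ∀ x ∈ O, x ∈ R.Φ := fun x hx => by
    rcases mem_insert.mp (hOsub hx) with rfl | hx
    · exact hα₀ ▸ R.neg_mem hθ.1.1
    · exact hΔ.1 hx
  have hdom : ∀ γ ∈ R.Φ, s γ = ζ → ∃ α ∈ O, IsNatComb (insert α₀ Δ \ O) (γ - α) := by
    intro γ hγ hsγ
    obtain ⟨b, rfl, hb⟩ := hθ.exists_eq_sum_le_marks hΔ hdθ hα₀ hα₀Δ hd0 hγ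
    exact exists_mem_isNatComb_sub hOsub (sum_insert_smul_eq_zero hα₀Δ hα₀' hd0) hs hζ hs1
      hsζ b (fun x hx => hb x (hOsub hx)) hsγ
  intro β
  constructor
  · intro hβ
    refine ⟨hOΦ β hβ, hsζ β hβ, fun γ hγ hsγ hγβ => ?_⟩
    obtain ⟨α, hα, hαγ⟩ := hdom γ hγ hsγ
    obtain rfl : α = β := eq_of_mem_of_isNatComb_sub hker hOsub hα hβ
      (sub_add_sub_cancel β γ α ▸ IsNatComb.add hγβ hαγ)
    exact (sub_eq_zero.mp (eq_zero_of_isNatComb_of_isNatComb_neg hker hOsub hOne hmarks hγβ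
      (by rwa [neg_sub]))).symm
  · rintro ⟨hβ, hsβ, hmin⟩
    obtain ⟨α, hα, hαβ⟩ := hdom β hβ hsβ
    rwa [← hmin α (hOΦ α hα) (hsζ α hα) hαβ]
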